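/- arXiv:math/9905182 — 2 statements merged into one kernel-verified Lean document; each statement's English description precedes it below -/
import Mathlib

section
/- Let G act on a set X and suppose the action is large, i.e., for all distinct x, y ∈ X the orbit of y under Stab(x) is infinite. Then the action has noncommensurable stabilizers: for distinct x, y ∈ X, Stab(x) and Stab(y) are not commensurable. -/
/-- A large action (every `Stab(x)`-orbit of a point `y ≠ x` is infinite) has
noncommensurable stabilizers. -/
theorem large_action_noncommensurable_stabilizers {G X : Type*} [Group G] [MulAction G X]
    (hlarge : ∀ x y : X, x ≠ y →
      {z : X | ∃ g ∈ MulAction.stabilizer G x, g • y = z}.Infinite)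
    (x y : X) (hxy : x ≠ y) :
    ¬ Subgroup.Commensurable (MulAction.stabilizer G x) (MulAction.stabilizer G y) := by
  intro hc
  set H := MulAction.stabilizer G x with hH
  have hst : MulAction.stabilizer H y = (MulAction.stabilizer G y).subgroupOf H := by
    ext h
    simp [MulAction.mem_stabilizer_iff, Subgroup.mem_subgroupOf, Subgroup.smul_def]
  have hidx : (MulAction.stabilizer H y).index ≠ 0 := by
    rw [hst]; exact hc.2
  have hfin : Finite (H ⧸ MulAction.stabilizer H y) :=
    Nat.finite_of_card_ne_zero (by simpa [Subgroup.index] using hidx)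
  have horb : (MulAction.orbit H y).Finite := by
    have := (MulAction.orbitEquivQuotientStabilizer H y)
    exact Set.finite_coe_iff.mp (Finite.of_equiv _ this.symm)
  apply hlarge x y hxy
  have : {z : X | ∃ g ∈ MulAction.stabilizer G x, g • y = z} = MulAction.orbit H y := by
    ext z
    constructor
    · rintro ⟨g, hg, rfl⟩; exact ⟨⟨g, hg⟩, rfl⟩
    · rintro ⟨⟨g, hg⟩, rfl⟩; exact ⟨g, hg, rfl⟩
  rw [this]; exact horb
end

section
/- In SL(2,ℤ), the subgroup B of upper triangular matrices (with diagonal entries ±1) equals its own commensurator: Com_{SL(2,ℤ)}(B) = B. -/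
open Matrix Pointwise

/-- The subgroup of upper triangular matrices in `SL(2, ℤ)`. -/
def upperTriangularSL2 : Subgroup (Matrix.SpecialLinearGroup (Fin 2) ℤ) where
  carrier := {A | (A : Matrix (Fin 2) (Fin 2) ℤ) 1 0 = 0}
  one_mem' := by simp
  mul_mem' := by
    intro A B hA hB
    simp only [Set.mem_setOf_eq] at *
    rw [Matrix.SpecialLinearGroup.coe_mul, Matrix.mul_apply, Fin.sum_univ_two, hA, hB]
    ring
  inv_mem' := by
    intro A hA
    simp only [Set.mem_setOf_eq] at *
    rw [Matrix.SpecialLinearGroup.coe_inv, Matrix.adjugate_fin_two]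
    simp [hA]

private lemma mem_upper_iff (A : Matrix.SpecialLinearGroup (Fin 2) ℤ) :
    A ∈ upperTriangularSL2 ↔ (A : Matrix (Fin 2) (Fin 2) ℤ) 1 0 = 0 := Iff.rfl

/-- Key computation: the lower-left entry of `g⁻¹ * x * g` when `x` is upper triangular. -/
private lemma conj_entry (g x : Matrix.SpecialLinearGroup (Fin 2) ℤ)
    (hx : (x : Matrix (Fin 2) (Fin 2) ℤ) 1 0 = 0) :
    ((g⁻¹ * x * g : Matrix.SpecialLinearGroup (Fin 2) ℤ) : Matrix (Fin 2) (Fin 2) ℤ) 1 0 =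
      - ((g : Matrix (Fin 2) (Fin 2) ℤ) 1 0)^2 * (x : Matrix (Fin 2) (Fin 2) ℤ) 0 1 := by
  have hdet : (x : Matrix (Fin 2) (Fin 2) ℤ).det = 1 := x.2
  rw [Matrix.det_fin_two, hx] at hdet
  have hdiag : (x : Matrix (Fin 2) (Fin 2) ℤ) 0 0 = (x : Matrix (Fin 2) (Fin 2) ℤ) 1 1 := by
    have hdet' : (x : Matrix (Fin 2) (Fin 2) ℤ) 0 0 * (x : Matrix (Fin 2) (Fin 2) ℤ) 1 1 = 1 := by
      linarith
    rcases Int.mul_eq_one_iff_eq_one_or_neg_one.mp hdet' with ⟨h1, h2⟩ | ⟨h1, h2⟩ <;> rw [h1, h2]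
  simp only [Matrix.SpecialLinearGroup.coe_mul, Matrix.SpecialLinearGroup.coe_inv,
    Matrix.adjugate_fin_two, Matrix.mul_apply, Fin.sum_univ_two]
  simp [hx, hdiag]
  ring

/-- In `SL(2,ℤ)`, the subgroup of upper triangular matrices equals its own commensurator. -/
theorem commensurator_upperTriangularSL2 :
    Subgroup.Commensurable.commensurator upperTriangularSL2 = upperTriangularSL2 := by
  ext g
  rw [Subgroup.Commensurable.commensurator_mem_iff]
  constructor
  · intro hg
    by_contra hc
    rw [mem_upper_iff] at hc
    -- the intersection is too small
    obtain ⟨h1, -⟩ := hg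
    apply h1
    rw [Subgroup.relIndex]
    rw [Subgroup.index, Nat.card_eq_zero]
    right
    set K := (ConjAct.toConjAct g • upperTriangularSL2).subgroupOf upperTriangularSL2
    have hT : ∀ n : ℤ, ModularGroup.T ^ n ∈ upperTriangularSL2 := by
      intro n
      rw [mem_upper_iff, ModularGroup.coe_T_zpow]
      simp
    refine Infinite.of_injective (fun n : ℤ => (QuotientGroup.mk ⟨ModularGroup.T ^ n, hT n⟩ :
      _ ⧸ K)) ?_
    intro a b hab
    rw [QuotientGroup.eq] at hab
    have hmem : (ModularGroup.T ^ a)⁻¹ * ModularGroup.T ^ b ∈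
        ConjAct.toConjAct g • upperTriangularSL2 := hab
    rw [← _root_.zpow_neg, ← _root_.zpow_add] at hmem
    rw [Subgroup.mem_pointwise_smul_iff_inv_smul_mem] at hmem
    rw [← ConjAct.toConjAct_inv, ConjAct.toConjAct_smul, mem_upper_iff] at hmem
    rw [inv_inv] at hmem
    rw [conj_entry] at hmem
    · have h01 : ((ModularGroup.T ^ (-a + b) : Matrix.SpecialLinearGroup (Fin 2) ℤ) :
          Matrix (Fin 2) (Fin 2) ℤ) 0 1 = -a + b := by
        rw [ModularGroup.coe_T_zpow]; simp
      rw [h01] at hmem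
      have := mul_eq_zero.mp hmem
      rcases this with h | h
      · exact absurd (pow_eq_zero_iff (by norm_num)|>.mp (neg_eq_zero.mp h)) hc
      · linarith
    · rw [ModularGroup.coe_T_zpow]; simp
  · intro hg
    have : ConjAct.toConjAct g • upperTriangularSL2 = upperTriangularSL2 := by
      ext x
      rw [Subgroup.mem_pointwise_smul_iff_inv_smul_mem, ← ConjAct.toConjAct_inv,
        ConjAct.toConjAct_smul]
      constructor
      · intro h
        have := upperTriangularSL2.mul_mem (upperTriangularSL2.mul_mem hg h)
          (upperTriangularSL2.inv_mem hg)
        simpa [mul_assoc] using this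
      · intro h
        exact upperTriangularSL2.mul_mem (upperTriangularSL2.mul_mem
          (upperTriangularSL2.inv_mem hg) h) (upperTriangularSL2.inv_mem
          (upperTriangularSL2.inv_mem hg))
    rw [this]
end
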